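/- With the fusion axioms above (X finite, vacuum 0, fusion coefficients N with the unit, commutativity, associativity and charge-conjugation axioms), the join operation on fusion-closed sets satisfies: for fusion-closed g, h, and any α ∈ g, β ∈ h, and any primary r with N α β r > 0, we have r ∈ g ∨ h; and conversely every element of g ∨ h arises in this way. Moreover the join is associative: (g ∨ h) ∨ j = g ∨ (h ∨ j) for fusion-closed g, h, j. -/

import Mathlib

/-!
Since the fusion coefficients are natural numbers, `p ∈ (g ∨ h) ∨ j` exactly when some
`α ∈ g, β ∈ h, γ ∈ j` give `0 < ∑ t, N α β t * N t γ p`, and `p ∈ g ∨ (h ∨ j)` exactly when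
they give `0 < ∑ t, N β γ t * N α t p`; the associativity axiom says these sums are equal.
-/

/-- A subset of primaries is fusion-closed if it contains the vacuum and is
closed under the fusion product. -/
def FusionClosed {X : Type*} (N : X → X → X → ℕ) (v : X) (g : Set X) : Prop :=
  v ∈ g ∧ ∀ p ∈ g, ∀ q ∈ g, ∀ r, 0 < N p q r → r ∈ g

/-- The join of two fusion-closed sets. -/
def fusionJoin {X : Type*} (N : X → X → X → ℕ) (g h : Set X) : Set X :=
  {p | ∃ α ∈ g, ∃ β ∈ h, 0 < N α β p}

section FusionJoin

variable {X : Type*} [Fintype X] (N : X → X → X → ℕ) (g h j : Set X) (p : X)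

lemma mem_fusionJoin_fusionJoin_left_iff :
    p ∈ fusionJoin N (fusionJoin N g h) j ↔
      ∃ α ∈ g, ∃ β ∈ h, ∃ γ ∈ j, 0 < ∑ t, N α β t * N t γ p := by
  simp only [fusionJoin, Finset.sum_pos_iff, Finset.mem_univ, true_and,
    CanonicallyOrderedAdd.mul_pos]
  aesop

lemma mem_fusionJoin_fusionJoin_right_iff :
    p ∈ fusionJoin N g (fusionJoin N h j) ↔
      ∃ α ∈ g, ∃ β ∈ h, ∃ γ ∈ j, 0 < ∑ t, N β γ t * N α t p := by
  simp only [fusionJoin, Finset.sum_pos_iff, Finset.mem_univ, true_and,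
    CanonicallyOrderedAdd.mul_pos]
  aesop

lemma fusionJoin_assoc
    (hassoc : ∀ p q r s, (∑ t, N p q t * N t r s) = ∑ t, N q r t * N p t s) :
    fusionJoin N (fusionJoin N g h) j = fusionJoin N g (fusionJoin N h j) := by
  ext p
  simp only [mem_fusionJoin_fusionJoin_left_iff, mem_fusionJoin_fusionJoin_right_iff, hassoc]

end FusionJoin

theorem fusion_join_mem_and_assoc_general
    (X : Type*) [Fintype X] (N : X → X → X → ℕ) (v : X)
    (hassoc : ∀ p q r s,
      (∑ t, N p q t * N t r s) = ∑ t, N q r t * N p t s) :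
    (∀ g h : Set X, FusionClosed N v g → FusionClosed N v h →
      (∀ α ∈ g, ∀ β ∈ h, ∀ r, 0 < N α β r → r ∈ fusionJoin N g h) ∧
      (∀ p ∈ fusionJoin N g h, ∃ α ∈ g, ∃ β ∈ h, 0 < N α β p)) ∧
    (∀ g h j : Set X, FusionClosed N v g → FusionClosed N v h →
      FusionClosed N v j →
      fusionJoin N (fusionJoin N g h) j = fusionJoin N g (fusionJoin N h j)) :=
  ⟨fun _ _ _ _ => ⟨fun α hα β hβ _ hr => ⟨α, hα, β, hβ, hr⟩, fun _ hp => hp⟩,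
    fun g h j _ _ _ => fusionJoin_assoc N g h j hassoc⟩

theorem fusion_join_mem_and_assoc
    (X : Type*) [Fintype X] [DecidableEq X] (N : X → X → X → ℕ) (v : X)
    (conj : X → X) (hinv : Function.Involutive conj)
    (hunit : ∀ p q, N v p q = if p = q then 1 else 0)
    (hcomm : ∀ p q r, N p q r = N q p r)
    (hassoc : ∀ p q r s,
      (∑ t, N p q t * N t r s) = ∑ t, N q r t * N p t s)
    (hconj : ∀ p q r, N p q (conj r) = N p r (conj q)) :
    (∀ g h : Set X, FusionClosed N v g → FusionClosed N v h →
      (∀ α ∈ g, ∀ β ∈ h, ∀ r, 0 < N α β r → r ∈ fusionJoin N g h) ∧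
      (∀ p ∈ fusionJoin N g h, ∃ α ∈ g, ∃ β ∈ h, 0 < N α β p)) ∧
    (∀ g h j : Set X, FusionClosed N v g → FusionClosed N v h →
      FusionClosed N v j →
      fusionJoin N (fusionJoin N g h) j = fusionJoin N g (fusionJoin N h j)) :=
  fusion_join_mem_and_assoc_general X N v hassoc
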